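/- arXiv:2007.06095 — 4 statements merged into one kernel-verified Lean document; each statement's English description precedes it below -/
import Mathlib

section
/- Let 𝒜 on X and ℱ, 𝒢 on U be σ-algebras. If there exist σ-algebras 𝒜₀ on X and ℰ on U with (𝒜 ⊗ ℱ) ∩ (𝒜 ⊗ 𝒢) = 𝒜₀ ⊗ ℰ, then (𝒜 ⊗ ℱ) ∩ (𝒜 ⊗ 𝒢) = 𝒜 ⊗ (ℱ ∩ 𝒢). In particular, the distributivity equation (𝒜 ⊗ ℱ) ∩ (𝒜 ⊗ 𝒢) = 𝒜 ⊗ (ℱ ∩ 𝒢) holds if and only if the left-hand side has product form. -/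
/-!
A product σ-algebra `𝒜₀ ⊗ ℰ` contained in `𝒜 ⊗ ℱ` on a nonempty product has `𝒜₀ ≤ 𝒜` and
`ℰ ≤ ℱ`: the rectangles `A ×ˢ univ` and `univ ×ˢ E` are `𝒜 ⊗ ℱ`-measurable, hence so are their
sections `A` and `E`. So if `(𝒜 ⊗ ℱ) ⊓ (𝒜 ⊗ 𝒢) = 𝒜₀ ⊗ ℰ`, then `𝒜₀ ≤ 𝒜` and `ℰ ≤ ℱ ⊓ 𝒢`, giving
`(𝒜 ⊗ ℱ) ⊓ (𝒜 ⊗ 𝒢) ≤ 𝒜 ⊗ (ℱ ⊓ 𝒢)`; the reverse inclusion is monotonicity of `⊗`.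
-/

open MeasureTheory

namespace MeasurableSpace

variable {X U : Type*}

theorem eq_of_subsingleton [Subsingleton X] (m₁ m₂ : MeasurableSpace X) : m₁ = m₂ :=
  MeasurableSpace.ext fun _ ↦
    iff_of_true (@Subsingleton.measurableSet _ m₁ _ _) (@Subsingleton.measurableSet _ m₂ _ _)

theorem prod_mono {m₁ m₂ : MeasurableSpace X} {n₁ n₂ : MeasurableSpace U}
    (hm : m₁ ≤ m₂) (hn : n₁ ≤ n₂) : m₁.prod n₁ ≤ m₂.prod n₂ :=
  sup_le_sup (comap_mono hm) (comap_mono hn)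

theorem le_of_prod_le_prod_left [Nonempty U] {m₁ m₂ : MeasurableSpace X}
    {n₁ n₂ : MeasurableSpace U} (h : m₁.prod n₁ ≤ m₂.prod n₂) : m₁ ≤ m₂ := by
  intro A hA
  obtain ⟨u⟩ := ‹Nonempty U›
  have hrect : MeasurableSet[m₂.prod n₂] (A ×ˢ Set.univ) :=
    h _ (@MeasurableSet.prod _ _ m₁ n₁ _ _ hA MeasurableSet.univ)
  simpa using @measurable_prodMk_right X U m₂ n₂ u _ hrect

theorem le_of_prod_le_prod_right [Nonempty X] {m₁ m₂ : MeasurableSpace X}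
    {n₁ n₂ : MeasurableSpace U} (h : m₁.prod n₁ ≤ m₂.prod n₂) : n₁ ≤ n₂ := by
  intro E hE
  obtain ⟨x⟩ := ‹Nonempty X›
  have hrect : MeasurableSet[m₂.prod n₂] (Set.univ ×ˢ E) :=
    h _ (@MeasurableSet.prod _ _ m₁ n₁ _ _ MeasurableSet.univ hE)
  simpa using @measurable_prodMk_left X U m₂ n₂ x _ hrect

theorem prod_le_prod_inf (𝒜 : MeasurableSpace X) (ℱ 𝒢 : MeasurableSpace U) :
    𝒜.prod (ℱ ⊓ 𝒢) ≤ 𝒜.prod ℱ ⊓ 𝒜.prod 𝒢 :=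
  le_inf (prod_mono le_rfl inf_le_left) (prod_mono le_rfl inf_le_right)

theorem prod_inf_prod_eq_prod_inf_of_eq_prod {𝒜 𝒜₀ : MeasurableSpace X}
    {ℱ 𝒢 ℰ : MeasurableSpace U} (h : 𝒜.prod ℱ ⊓ 𝒜.prod 𝒢 = 𝒜₀.prod ℰ) :
    𝒜.prod ℱ ⊓ 𝒜.prod 𝒢 = 𝒜.prod (ℱ ⊓ 𝒢) := by
  cases isEmpty_or_nonempty (X × U)
  · exact eq_of_subsingleton _ _
  obtain ⟨hX, hU⟩ := nonempty_prod.mp ‹Nonempty (X × U)›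
  have hF : 𝒜₀.prod ℰ ≤ 𝒜.prod ℱ := h ▸ inf_le_left
  have hG : 𝒜₀.prod ℰ ≤ 𝒜.prod 𝒢 := h ▸ inf_le_right
  refine le_antisymm ?_ (prod_le_prod_inf 𝒜 ℱ 𝒢)
  rw [h]
  exact prod_mono (le_of_prod_le_prod_left hF)
    (le_inf (le_of_prod_le_prod_right hF) (le_of_prod_le_prod_right hG))

end MeasurableSpace

theorem stmt_3 (X U : Type*) (𝒜 : MeasurableSpace X) (ℱ 𝒢 : MeasurableSpace U) :
    ((∃ (𝒜₀ : MeasurableSpace X) (ℰ : MeasurableSpace U),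
        𝒜.prod ℱ ⊓ 𝒜.prod 𝒢 = 𝒜₀.prod ℰ) →
      𝒜.prod ℱ ⊓ 𝒜.prod 𝒢 = 𝒜.prod (ℱ ⊓ 𝒢)) ∧
    ((𝒜.prod ℱ ⊓ 𝒜.prod 𝒢 = 𝒜.prod (ℱ ⊓ 𝒢)) ↔
      ∃ (𝒜₀ : MeasurableSpace X) (ℰ : MeasurableSpace U),
        𝒜.prod ℱ ⊓ 𝒜.prod 𝒢 = 𝒜₀.prod ℰ) := by
  have of_product_form : (∃ (𝒜₀ : MeasurableSpace X) (ℰ : MeasurableSpace U),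
      𝒜.prod ℱ ⊓ 𝒜.prod 𝒢 = 𝒜₀.prod ℰ) → 𝒜.prod ℱ ⊓ 𝒜.prod 𝒢 = 𝒜.prod (ℱ ⊓ 𝒢) :=
    fun ⟨_, _, h⟩ ↦ MeasurableSpace.prod_inf_prod_eq_prod_inf_of_eq_prod h
  exact ⟨of_product_form, fun h ↦ ⟨𝒜, ℱ ⊓ 𝒢, h⟩, of_product_form⟩
end

section
/- Every bounded function on [0,1]² measurable with respect to 𝒫([0,1]) ⊗ 𝒞, where 𝒫([0,1]) is the power set σ-algebra and 𝒞 the countable-cocountable σ-algebra, agrees with a function of the first variable alone for all values of the second variable outside a countable set. That is, every bounded 𝒫([0,1]) ⊗ 𝒞-measurable f : [0,1]² → ℝ satisfies: there exist g : [0,1] → ℝ and a countable A ⊆ [0,1] with f(x,y) = g(x) for all x and all y ∉ A. -/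
/-!
Call `s ⊆ α × β` good if its sections `{x | (x, y) ∈ s}` coincide with one fixed `B ⊆ α` for all
`y` outside a countable set. Good sets form a σ-algebra (countably many countable exceptional
sets have a countable union) containing every `A × β` and every `α × C` with `C` countable or
co-countable, hence all of `𝒫(α) ⊗ 𝒞`. For measurable `f`, the preimages of a countable family
of Borel sets separating the points of `ℝ` are good; off the union of their exceptional sets,
`f (x, y)` lies in exactly the same members of the family as `f (x, y₀)`, so the two agree.
-/

open MeasureTheory Filter Set

namespace Filter

variable {α : Type*}

instance countableInterFilter_cocountable : CountableInterFilter (cocountable : Filter α) :=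
  CardinalInterFilter.toCountableInterFilter _ Cardinal.aleph0_lt_aleph_one

instance neBot_cocountable [Uncountable α] : (cocountable : Filter α).NeBot :=
  ⟨fun h => not_countable_univ (by simpa using mem_cocountable.1 (empty_mem_iff_bot.2 h))⟩

end Filter

instance : Uncountable unitInterval :=
  Cardinal.aleph0_lt_mk_iff.1 <|
    (Cardinal.mk_Icc_real zero_lt_one).symm ▸ Cardinal.aleph0_lt_continuum

namespace MeasurableSpace

variable (α β : Type*)

@[reducible]
def cocountablyConstSections : MeasurableSpace (α × β) where
  MeasurableSet' s := ∃ B : Set α, ∀ᶠ y in cocountable, (·, y) ⁻¹' s = B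
  measurableSet_empty := ⟨∅, univ_mem' fun _ => preimage_empty⟩
  measurableSet_compl := by
    rintro s ⟨B, hB⟩
    exact ⟨Bᶜ, hB.mono fun y hy => by rw [preimage_compl, hy]⟩
  measurableSet_iUnion := by
    intro s hs
    choose B hB using hs
    exact ⟨⋃ n, B n, (eventually_countable_forall.2 hB).mono fun y hy => by
      simp only [preimage_iUnion, hy]⟩

theorem prod_top_countableCocountable_le_cocountablyConstSections :
    prod ⊤ (generateFrom {t : Set β | t.Countable ∨ tᶜ.Countable}) ≤
      cocountablyConstSections α β := by
  refine sup_le ?_ ?_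
  · rintro _ ⟨A, -, rfl⟩
    exact ⟨A, univ_mem' fun _ => rfl⟩
  · rw [comap_generateFrom]
    refine generateFrom_le ?_
    rintro _ ⟨t, ht | ht, rfl⟩
    · have ht' : tᶜ ∈ cocountable := mem_cocountable.2 (by rwa [compl_compl])
      exact ⟨∅, mem_of_superset ht' fun y hy => preimage_const_of_notMem hy⟩
    · have ht' : t ∈ cocountable := mem_cocountable.2 ht
      exact ⟨univ, mem_of_superset ht' fun y hy => preimage_const_of_mem hy⟩

end MeasurableSpace

open MeasurableSpace in
theorem exists_eventually_sections_eq_of_measurable {α β γ : Type*} [Uncountable β]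
    [MeasurableSpace γ] [CountablySeparated γ] {f : α × β → γ}
    (hf : Measurable[cocountablyConstSections α β] f) :
    ∃ g : α → γ, ∀ᶠ y in cocountable, ∀ x, f (x, y) = g x := by
  obtain ⟨U, hUm, hU⟩ := exists_seq_separating γ MeasurableSet.empty univ
  choose B hB using fun n => hf (hUm n)
  have hconst : ∀ᶠ y in cocountable, ∀ n, (·, y) ⁻¹' (f ⁻¹' U n) = B n :=
    eventually_countable_forall.2 hB
  obtain ⟨y₀, hy₀⟩ := hconst.exists
  refine ⟨fun x => f (x, y₀), hconst.mono fun y hy x => ?_⟩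
  refine hU _ trivial _ trivial fun n => ?_
  change x ∈ (·, y) ⁻¹' (f ⁻¹' U n) ↔ x ∈ (·, y₀) ⁻¹' (f ⁻¹' U n)
  rw [hy n, hy₀ n]

theorem stmt_8_general
    (mC : MeasurableSpace unitInterval)
    (hmC : mC = MeasurableSpace.generateFrom {S | S.Countable ∨ Sᶜ.Countable})
    (f : unitInterval × unitInterval → ℝ)
    (hf : @Measurable _ _ (MeasurableSpace.prod ⊤ mC) _ f) :
    ∃ (g : unitInterval → ℝ) (A : Set unitInterval), A.Countable ∧
      ∀ x y, y ∉ A → f (x, y) = g x := by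
  subst hmC
  obtain ⟨g, hg⟩ := exists_eventually_sections_eq_of_measurable
    (hf.mono (MeasurableSpace.prod_top_countableCocountable_le_cocountablyConstSections _ _) le_rfl)
  exact ⟨g, _, mem_cocountable.1 hg, fun x y hy => not_not.1 hy x⟩

theorem stmt_8
    (mC : MeasurableSpace unitInterval)
    (hmC : mC = MeasurableSpace.generateFrom {S | S.Countable ∨ Sᶜ.Countable})
    (f : unitInterval × unitInterval → ℝ)
    (hf : @Measurable _ _ (MeasurableSpace.prod ⊤ mC) _ f)
    (hbd : ∃ M : ℝ, ∀ p, |f p| ≤ M) :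
    ∃ (g : unitInterval → ℝ) (A : Set unitInterval), A.Countable ∧
      ∀ x y, y ∉ A → f (x, y) = g x :=
  stmt_8_general mC hmC f hf
end

section
/- The diagonal Δ = {(x,x) : x ∈ [0,1]} does not belong to the product σ-algebra 𝒫([0,1]) ⊗ 𝒞, where 𝒫([0,1]) is the power set of [0,1] and 𝒞 is the σ-algebra of countable and co-countable subsets of [0,1]. -/
/-!
The sets `s ⊆ α × β` whose sections `{x | (x, y) ∈ s}` all coincide for `y` outside a countable
set form a σ-algebra (the cocountable filter is closed under countable intersections). It contains
the rectangles `A × C` with `C` countable or cocountable, hence all of `𝒫(α) ⊗ 𝒞`. The sections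
of the diagonal are the pairwise distinct singletons `{y}`, so for uncountable `α` it is not in
this σ-algebra.
-/

open MeasureTheory Filter Set

instance unitInterval.instUncountable : Uncountable unitInterval :=
  ⟨fun h => zero_lt_one.not_ge (Cardinal.Real.Icc_countable_iff.1 (countable_coe_iff.1 h))⟩

instance Filter.cocountable_neBot {β : Type*} [Uncountable β] : (cocountable : Filter β).NeBot :=
  ⟨fun h => not_countable_univ (compl_empty (α := β) ▸ mem_cocountable.1 (h ▸ mem_bot))⟩

namespace MeasurableSpace

abbrev sectionsCocountablyConst (α β : Type*) : MeasurableSpace (α × β) where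
  MeasurableSet' s := ∃ t : Set α, ∀ᶠ y in cocountable, {x | (x, y) ∈ s} = t
  measurableSet_empty := ⟨∅, univ_mem' fun _ => rfl⟩
  measurableSet_compl := by
    rintro s ⟨t, ht⟩
    exact ⟨tᶜ, ht.mono fun y hy => by rw [← hy]; rfl⟩
  measurableSet_iUnion := by
    intro s hs
    choose t ht using hs
    have : CountableInterFilter (cocountable : Filter β) :=
      CardinalInterFilter.toCountableInterFilter _ Cardinal.aleph0_lt_aleph_one
    refine ⟨⋃ n, t n, (eventually_countable_forall.2 ht).mono fun y hy => ?_⟩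
    simp only [mem_iUnion, ← hy]
    ext; simp

theorem prod_top_le_sectionsCocountablyConst (α β : Type*) :
    MeasurableSpace.prod ⊤ (generateFrom {S : Set β | S.Countable ∨ Sᶜ.Countable}) ≤
      sectionsCocountablyConst α β := by
  refine sup_le ?_ ?_
  · rintro _ ⟨A, -, rfl⟩
    exact ⟨A, univ_mem' fun _ => rfl⟩
  · rw [comap_generateFrom]
    refine generateFrom_le ?_
    rintro _ ⟨C, hC | hC, rfl⟩
    · refine ⟨∅, ?_⟩
      filter_upwards [mem_cocountable.2 (by rwa [compl_compl] : Cᶜᶜ.Countable)] with y hy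
      ext; simpa using hy
    · refine ⟨univ, ?_⟩
      filter_upwards [mem_cocountable.2 hC] with y hy
      ext; simpa using hy

theorem diagonal_not_measurableSet_sectionsCocountablyConst (α : Type*) [Uncountable α] :
    ¬ MeasurableSet[sectionsCocountablyConst α α] {p : α × α | p.1 = p.2} := by
  rintro ⟨t, ht⟩
  obtain ⟨y, hy⟩ := ht.exists
  obtain ⟨z, hz, hzy⟩ := (ht.and (eventually_cocardinal_ne y)).exists
  exact hzy ((Set.ext_iff.1 (hz.trans hy.symm) z).1 rfl)

end MeasurableSpace

theorem stmt_9
    (mC : MeasurableSpace unitInterval)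
    (hmC : mC = MeasurableSpace.generateFrom {S | S.Countable ∨ Sᶜ.Countable}) :
    ¬ MeasurableSet[MeasurableSpace.prod ⊤ mC]
        {p : unitInterval × unitInterval | p.1 = p.2} := by
  subst hmC
  exact fun h => MeasurableSpace.diagonal_not_measurableSet_sectionsCocountablyConst _
    (MeasurableSpace.prod_top_le_sectionsCocountablyConst _ _ _ h)
end

section
/- Let 𝒜 and 𝒞 be countably generated σ-algebras on sets X and U respectively. Then every atom of the product σ-algebra 𝒜 ⊗ 𝒞 on X × U is a Cartesian product A × C, where A is an atom of 𝒜 and C is an atom of 𝒞. -/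
/-!
In a countably generated space the measurable atom of a point, the intersection of all measurable
sets containing it, is itself measurable, so the atoms are exactly these sets. The atom of `(x, u)`
is the product of the atoms of `x` and `u` because measurable sets of a product have measurable
sections.
-/

open MeasureTheory

/-- An atom of a σ-algebra: a nonempty measurable set whose only measurable
subsets are `∅` and itself. -/
def IsMeasurableAtom {X : Type*} (m : MeasurableSpace X) (A : Set X) : Prop :=
  A.Nonempty ∧ MeasurableSet[m] A ∧
    ∀ s : Set X, MeasurableSet[m] s → s ⊆ A → s = ∅ ∨ s = A

section

variable {α β : Type*} [MeasurableSpace α] [MeasurableSpace β]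

lemma mem_measurableAtom_of_forall {x y : α}
    (h : ∀ s, MeasurableSet s → x ∈ s → y ∈ s) : y ∈ measurableAtom x := by
  simp only [measurableAtom, Set.mem_iInter]
  exact fun s hxs hs => h s hs hxs

lemma measurableAtom_prod (x : α) (u : β) :
    measurableAtom (x, u) = measurableAtom x ×ˢ measurableAtom u := by
  ext ⟨y, v⟩
  refine ⟨fun h => ⟨?_, ?_⟩, fun ⟨hy, hv⟩ => ?_⟩
  · exact mem_measurableAtom_of_forall fun s hs hxs =>
      mem_of_mem_measurableAtom h (measurable_fst hs) hxs
  · exact mem_measurableAtom_of_forall fun s hs hus =>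
      mem_of_mem_measurableAtom h (measurable_snd hs) hus
  · -- move one coordinate at a time, along the measurable sections of `s`
    refine mem_measurableAtom_of_forall fun s hs hxu => ?_
    have hyu : (y, u) ∈ s := mem_of_mem_measurableAtom hy (measurable_prodMk_right hs) hxu
    exact mem_of_mem_measurableAtom hv (measurable_prodMk_left hs) hyu

end

section CountablyGenerated

variable {α : Type*} {m : MeasurableSpace α} [MeasurableSpace.CountablyGenerated α]

lemma isMeasurableAtom_measurableAtom (x : α) : IsMeasurableAtom m (measurableAtom x) := by
  refine ⟨⟨x, mem_measurableAtom_self x⟩, MeasurableSpace.measurableSet_measurableAtom x,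
    fun s hs hsub => ?_⟩
  rcases s.eq_empty_or_nonempty with hempty | ⟨y, hy⟩
  · exact Or.inl hempty
  · refine Or.inr (hsub.antisymm ?_)
    rw [← measurableAtom_eq_of_mem (hsub hy)]
    exact measurableAtom_subset hs hy

lemma IsMeasurableAtom.eq_measurableAtom {K : Set α} (hK : IsMeasurableAtom m K) {x : α}
    (hx : x ∈ K) : K = measurableAtom x :=
  ((hK.2.2 _ (MeasurableSpace.measurableSet_measurableAtom x)
    (measurableAtom_subset hK.2.1 hx)).resolve_left
    (Set.nonempty_of_mem (mem_measurableAtom_self x)).ne_empty).symm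

end CountablyGenerated

theorem stmt_16 (X U : Type*) (𝒜 : MeasurableSpace X) (𝒞 : MeasurableSpace U)
    [𝒜.CountablyGenerated] [𝒞.CountablyGenerated]
    (K : Set (X × U)) (hK : IsMeasurableAtom (𝒜.prod 𝒞) K) :
    ∃ (A : Set X) (C : Set U),
      IsMeasurableAtom 𝒜 A ∧ IsMeasurableAtom 𝒞 C ∧ K = A ×ˢ C := by
  obtain ⟨⟨x, u⟩, hxu⟩ := hK.1
  refine ⟨measurableAtom x, measurableAtom u, isMeasurableAtom_measurableAtom x,
    isMeasurableAtom_measurableAtom u, ?_⟩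
  rw [hK.eq_measurableAtom hxu, measurableAtom_prod]
end
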